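/- The Petersen graph is not (2,3)-orientable. -/
import Mathlib


open Finset

variable {V : Type*} [Fintype V] [DecidableEq V]

/-- The label induced on an arc `a = (u, v)` by a vertex labeling `f : V → {0,1}`:
`g(u→v) = f(v) - f(u)`. -/
def arcLabel (f : V → Fin 2) (a : V × V) : ℤ := ((f a.2 : ℕ) : ℤ) - ((f a.1 : ℕ) : ℤ)

/-- The number of arcs of `A` receiving induced label `i`. -/
def labelCount (A : Finset (V × V)) (f : V → Fin 2) (i : ℤ) : ℕ :=
  (A.filter fun a => arcLabel f a = i).card

/-- A vertex labeling `f : V → {0,1}` is friendly if the number of vertices labeled `0`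
and the number labeled `1` differ by at most `1`. -/
def Friendly (f : V → Fin 2) : Prop :=
  |((univ.filter fun v => f v = 0).card : ℤ) - ((univ.filter fun v => f v = 1).card : ℤ)| ≤ 1

/-- A digraph (given by its arc set `A`) is (2,3)-cordial if there is a friendly vertex
labeling whose induced arc labeling `g` satisfies
`-1 ≤ |g⁻¹(i)| - |g⁻¹(j)| ≤ 1` for all `i, j ∈ {-1, 0, 1}`. -/
def Cordial (A : Finset (V × V)) : Prop :=
  ∃ f : V → Fin 2, Friendly f ∧
    ∀ i ∈ ({-1, 0, 1} : Finset ℤ), ∀ j ∈ ({-1, 0, 1} : Finset ℤ),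
      -1 ≤ (labelCount A f i : ℤ) - (labelCount A f j : ℤ) ∧
        (labelCount A f i : ℤ) - (labelCount A f j : ℤ) ≤ 1

/-- The 15 edges of the Petersen graph: outer 5-cycle `a₁a₂a₃a₄a₅`
(vertices `0, …, 4 : Fin 10`), inner pentagram `b₁b₃b₅b₂b₄` (`bᵢ` is vertex `4 + i`,
with `bᵢ` adjacent to `b_{i+2}`, indices mod 5), and spokes `aᵢbᵢ`. -/
def petersenEdges : Fin 15 → Fin 10 × Fin 10 :=
  ![(0, 1), (1, 2), (2, 3), (3, 4), (4, 0),
    (5, 7), (7, 9), (9, 6), (6, 8), (8, 5),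
    (0, 5), (1, 6), (2, 7), (3, 8), (4, 9)]

/-- The orientation of a graph given by an edge list `e` and a choice `o` of a
direction for each edge. -/
def orientBy {n : ℕ} (e : Fin n → V × V) (o : Fin n → Bool) : Finset (V × V) :=
  univ.image fun i => if o i then e i else ((e i).2, (e i).1)

lemma arcLabel_cases' (f : V → Fin 2) (a : V × V) :
    arcLabel f a = -1 ∨ arcLabel f a = 0 ∨ arcLabel f a = 1 := by
  have h1 : (f a.1).val < 2 := (f a.1).isLt
  have h2 : (f a.2).val < 2 := (f a.2).isLt
  unfold arcLabel; omega

lemma arcLabel_zero_iff' (f : V → Fin 2) (a : V × V) :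
    arcLabel f a = 0 ↔ f a.1 = f a.2 := by
  unfold arcLabel
  rw [Fin.ext_iff]
  omega

lemma three_filter_card' (f : V → Fin 2) (A : Finset (V × V)) :
    labelCount A f (-1) + labelCount A f 0 + labelCount A f 1 = A.card := by
  unfold labelCount
  induction A using Finset.induction_on with
  | empty => simp
  | @insert a s ha ih =>
    rw [Finset.filter_insert, Finset.filter_insert, Finset.filter_insert,
        Finset.card_insert_of_notMem ha]
    rcases arcLabel_cases' f a with h|h|h <;>
      simp only [h] <;> norm_num <;>
      rw [Finset.card_insert_of_notMem (fun hm => ha (Finset.mem_filter.mp hm).1)] <;>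
      omega

lemma petersen_arc_inj : ∀ (b c : Bool) (i j : Fin 15),
    (if b then petersenEdges i else ((petersenEdges i).2, (petersenEdges i).1)) =
    (if c then petersenEdges j else ((petersenEdges j).2, (petersenEdges j).1)) → i = j := by
  decide

lemma mono_ne_five' (f : Fin 10 → Fin 2) (h5 : (univ.filter fun v => f v = 1).card = 5) :
    (univ.filter fun i : Fin 15 => f (petersenEdges i).1 = f (petersenEdges i).2).card ≠ 5 := by
  rw [Finset.card_filter] at h5 ⊢
  have key : ∀ u : Fin 2, (if u = 1 then (1:ℕ) else 0) = u.val := by decide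
  simp only [key] at h5
  intro hmono
  have h5' : ((∑ v : Fin 10, (f v).val : ℕ) : ZMod 2) = 5 := by rw [h5]; norm_num
  push_cast at h5'
  have h2 : ((∑ i : Fin 15, if f (petersenEdges i).1 = f (petersenEdges i).2 then (1:ℕ) else 0 : ℕ) : ZMod 2) = 0 := by
    push_cast
    have key2 : ∀ u v : Fin 2, (if u = v then (1:ZMod 2) else 0) = 1 + (u.val : ZMod 2) + (v.val : ZMod 2) := by decide
    simp only [key2]
    simp only [petersenEdges, Fin.sum_univ_succ, Fin.sum_univ_zero, Matrix.cons_val_zero,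
      Matrix.cons_val_succ, Fin.succ_zero_eq_one] at h5' ⊢
    simp only [show (1:Fin 9).succ = (2:Fin 10) from by decide,
      show (1:Fin 8).succ.succ = (3:Fin 10) from by decide,
      show (1:Fin 7).succ.succ.succ = (4:Fin 10) from by decide,
      show (1:Fin 6).succ.succ.succ.succ = (5:Fin 10) from by decide,
      show (1:Fin 5).succ.succ.succ.succ.succ = (6:Fin 10) from by decide,
      show (1:Fin 4).succ.succ.succ.succ.succ.succ = (7:Fin 10) from by decide,
      show (1:Fin 3).succ.succ.succ.succ.succ.succ.succ = (8:Fin 10) from by decide,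
      show (1:Fin 2).succ.succ.succ.succ.succ.succ.succ.succ = (9:Fin 10) from by decide] at h5'
    have h30 : (30 : ZMod 2) = 0 := by decide
    linear_combination 3 * h5' + h30
  rw [hmono] at h2
  exact absurd h2 (by decide)

set_option maxHeartbeats 1000000 in
/-- The Petersen graph is not (2,3)-orientable: no orientation of its edges yields a
(2,3)-cordial digraph. -/
theorem petersen_not_orientable :
    ¬ ∃ o : Fin 15 → Bool, Cordial (orientBy petersenEdges o) := by
  rintro ⟨o, f, hf, hc⟩
  set g : Fin 15 → Fin 10 × Fin 10 :=
    fun i => if o i then petersenEdges i else ((petersenEdges i).2, (petersenEdges i).1) with hg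
  have hinj : Function.Injective g := fun i j h => petersen_arc_inj (o i) (o j) i j h
  have hA : orientBy petersenEdges o = univ.image g := rfl
  have hcard : (orientBy petersenEdges o).card = 15 := by
    rw [hA, Finset.card_image_of_injective _ hinj, card_univ, Fintype.card_fin]
  -- the three counts sum to 15, and are pairwise within 1, so all equal 5
  have hsum := three_filter_card' f (orientBy petersenEdges o)
  rw [hcard] at hsum
  have h01 := hc 0 (by norm_num) (-1) (by norm_num)
  have h02 := hc 0 (by norm_num) 1 (by norm_num)
  have hz : labelCount (orientBy petersenEdges o) f 0 = 5 := by omega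
  -- labelCount 0 counts monochromatic edges
  have hmono : labelCount (orientBy petersenEdges o) f 0 =
      (univ.filter fun i : Fin 15 => f (petersenEdges i).1 = f (petersenEdges i).2).card := by
    unfold labelCount
    rw [hA, Finset.filter_image, Finset.card_image_of_injective _ hinj]
    exact congrArg Finset.card (Finset.filter_congr fun i _ => by
      by_cases h : o i
      · simp only [hg, if_pos h]
        exact arcLabel_zero_iff' f _
      · simp only [hg, if_neg h]
        rw [arcLabel_zero_iff']
        exact eq_comm)
  -- Friendly forces exactly five vertices labeled 1
  have hiff : ∀ u : Fin 2, (¬ u = 0) ↔ u = 1 := by decide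
  have hcards : (univ.filter fun v => f v = 0).card + (univ.filter fun v => f v = 1).card = 10 := by
    have h := Finset.card_filter_add_card_filter_not (s := (univ : Finset (Fin 10)))
      (p := fun v => f v = 0)
    rwa [Finset.filter_congr (fun v _ => hiff (f v)), Finset.card_univ, Fintype.card_fin] at h
  have h5 : (univ.filter fun v => f v = 1).card = 5 := by
    unfold Friendly at hf
    rw [abs_le] at hf
    omega
  exact mono_ne_five' f h5 (by rw [← hmono]; exact hz)
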